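/- arXiv:2206.09740 — 3 statements merged into one kernel-verified Lean document; each statement's English description precedes it below -/
import Mathlib

section
/- Let P be a finite point set in ℂ and let C₁, C₂ > 0. Let S ⊆ SE₂(ℝ) be a finite set such that every θ ∈ S satisfies |P ∩ θ·P| ≥ C₁|P|, and suppose there is g ∈ Aff(ℂ) with |gU₀ ∩ S| ≥ C₂|P| > 0. Then E₊(P) ≥ C₂C₁³|P|³. -/
open scoped Classical

noncomputable section

/-- Multiplication in the affine group `Aff(ℂ) = ℂ* ⋉ ℂ`, represented as pairs. -/
def aMul (g h : ℂ × ℂ) : ℂ × ℂ := (g.1 * h.1, g.1 * h.2 + g.2)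

/-- Inverse in the affine group. -/
def aInv (g : ℂ × ℂ) : ℂ × ℂ := (g.1⁻¹, -(g.2 / g.1))

/-- Action of the affine group on ℂ : `(a,b)·z = a z + b`. -/
def aAct (g : ℂ × ℂ) (z : ℂ) : ℂ := g.1 * z + g.2

/-- The group of rigid motions `SE₂(ℝ) = {(a,b) : |a| = 1}`. -/
def SE2 : Set (ℂ × ℂ) := {g | ‖g.1‖ = 1}

/-- The affine group `Aff(ℂ)`: pairs `(a,b)` with `a ≠ 0`. -/
def affG : Set (ℂ × ℂ) := {g | g.1 ≠ 0}

/-- The unipotent subgroup `U₀ = {(1,z) : z ∈ ℂ}`. -/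
def U0 : Set (ℂ × ℂ) := {g | g.1 = 1}

/-- The stabilizer `T(z)` of `z` in the affine group. -/
def stab (z : ℂ) : Set (ℂ × ℂ) := {g | g.1 ≠ 0 ∧ aAct g z = z}

/-- The set of congruence classes of triangles determined by `P`. -/
def triangleSet (P : Finset ℂ) : Set (ℝ × ℝ × ℝ) :=
  {x | ∃ p ∈ P, ∃ q ∈ P, ∃ r ∈ P,
    x = (‖p - q‖, ‖q - r‖, ‖p - r‖)}

/-- The triangle energy `E_T(P)`. -/
def Etri (P : Finset ℂ) : ℕ :=
  Set.ncard {x : (ℂ × ℂ × ℂ) × (ℂ × ℂ × ℂ) |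
    x.1.1 ∈ P ∧ x.1.2.1 ∈ P ∧ x.1.2.2 ∈ P ∧ x.2.1 ∈ P ∧ x.2.2.1 ∈ P ∧ x.2.2.2 ∈ P ∧
    ‖x.1.1 - x.1.2.1‖ = ‖x.2.1 - x.2.2.1‖ ∧
    ‖x.1.2.1 - x.1.2.2‖ = ‖x.2.2.1 - x.2.2.2‖ ∧
    ‖x.1.1 - x.1.2.2‖ = ‖x.2.1 - x.2.2.2‖}

/-- The additive energy `E₊(A)`. -/
def Eadd (A : Set ℂ) : ℕ :=
  Set.ncard {x : ℂ × ℂ × ℂ × ℂ | x.1 ∈ A ∧ x.2.1 ∈ A ∧ x.2.2.1 ∈ A ∧ x.2.2.2 ∈ A ∧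
    x.1 + x.2.1 = x.2.2.1 + x.2.2.2}

/-- The multiplicative energy `E_×(A)`. -/
def Emul (A : Set ℂ) : ℕ :=
  Set.ncard {x : ℂ × ℂ × ℂ × ℂ | x.1 ∈ A ∧ x.2.1 ∈ A ∧ x.2.2.1 ∈ A ∧ x.2.2.2 ∈ A ∧
    x.1 * x.2.1 = x.2.2.1 * x.2.2.2}

/-- The group energy `E(S)` of a set of affine transformations. -/
def gEnergy (S : Set (ℂ × ℂ)) : ℕ :=
  Set.ncard {x : (ℂ × ℂ) × (ℂ × ℂ) × (ℂ × ℂ) × (ℂ × ℂ) |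
    x.1 ∈ S ∧ x.2.1 ∈ S ∧ x.2.2.1 ∈ S ∧ x.2.2.2 ∈ S ∧
    aMul x.1 (aInv x.2.1) = aMul x.2.2.1 (aInv x.2.2.2)}

/-- The richness `|P ∩ θ·P|` of a motion `θ` with respect to `P`. -/
def rich (P : Finset ℂ) (θ : ℂ × ℂ) : ℕ :=
  Set.ncard ((P : Set ℂ) ∩ (aAct θ '' (P : Set ℂ)))

/-- The set `S_{≥k}(P)` of at-least-`k`-rich rigid motions. -/
def Sk (P : Finset ℂ) (k : ℕ) : Set (ℂ × ℂ) := {θ | θ ∈ SE2 ∧ k ≤ rich P θ}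

/-- The line `{a + t b : t ∈ ℝ}`. -/
def lineThrough (a b : ℂ) : Set ℂ := {z | ∃ t : ℝ, z = a + t * b}

/-- The circle of centre `c₀` and radius `r`. -/
def circleSet (c₀ : ℂ) (r : ℝ) : Set ℂ := {w | ‖w - c₀‖ = r}

/-!
Every element of `gU₀` has linear part `a = g.1`, and the richness of `(a, c)` is the number of
representations `c = p + q` with `p ∈ P`, `q ∈ -a • P`. The sum of the squared richnesses over the
coset is therefore at most the mixed energy `E(P, -a • P)`, which by Cauchy–Schwarz is at most
`√(E(P) E(-a • P)) = E(P)`. Hence `|gU₀ ∩ S| (C₁|P|)² ≤ E₊(P)`, and `C₁ ≤ 1`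
(a richness never exceeds `|P|`) finishes the proof.
-/

open scoped Pointwise Combinatorics.Additive
open Finset

namespace Finset

variable {β γ : Type*} [DecidableEq γ]

lemma card_filter_product_eq_sum_mul (f : β → γ) (A B : Finset β) {u : Finset γ}
    (hu : A.image f ⊆ u) :
    #{x ∈ A ×ˢ B | f x.1 = f x.2} = ∑ c ∈ u, #{a ∈ A | f a = c} * #{b ∈ B | f b = c} := by
  rw [card_eq_sum_card_fiberwise (f := fun x => f x.1) fun x hx =>
    hu (mem_image_of_mem f (mem_product.1 (mem_filter.1 hx).1).1)]
  refine sum_congr rfl fun c _ => ?_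
  rw [← card_product, filter_filter]
  congr 1
  ext ⟨a, b⟩
  simp only [mem_filter, mem_product]
  constructor
  · rintro ⟨⟨ha, hb⟩, hab, rfl⟩
    exact ⟨⟨ha, rfl⟩, hb, hab.symm⟩
  · rintro ⟨⟨ha, rfl⟩, hb, hab⟩
    exact ⟨⟨ha, hb⟩, hab.symm, rfl⟩

lemma card_filter_product_sq_le (f : β → γ) (A B : Finset β) :
    #{x ∈ A ×ˢ B | f x.1 = f x.2} ^ 2 ≤
      #{x ∈ A ×ˢ A | f x.1 = f x.2} * #{x ∈ B ×ˢ B | f x.1 = f x.2} := by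
  classical
  have hA : A.image f ⊆ (A ∪ B).image f := image_subset_image subset_union_left
  have hB : B.image f ⊆ (A ∪ B).image f := image_subset_image subset_union_right
  rw [card_filter_product_eq_sum_mul f A B hA, card_filter_product_eq_sum_mul f A A hA,
    card_filter_product_eq_sum_mul f B B hB]
  simpa only [sq] using sum_mul_sq_le_sq_mul_sq _ _ _

variable {α : Type*} [DecidableEq α]

lemma card_filter_add_eq_card_filter_neg_add_mem [AddGroup α] (s t : Finset α) (c : α) :
    #{x ∈ s ×ˢ t | x.1 + x.2 = c} = #{a ∈ s | -a + c ∈ t} := by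
  refine card_nbij' Prod.fst (fun a => (a, -a + c)) ?_ ?_ ?_ ?_
  · rintro ⟨a, b⟩ h
    simp only [coe_filter, mem_product, Set.mem_ofPred_eq] at h ⊢
    obtain ⟨⟨ha, hb⟩, rfl⟩ := h
    simpa using And.intro ha hb
  · intro a h
    simp only [coe_filter, mem_product, Set.mem_ofPred_eq] at h ⊢
    simpa using h
  · rintro ⟨a, b⟩ h
    simp only [coe_filter, mem_product, Set.mem_ofPred_eq] at h
    obtain ⟨-, rfl⟩ := h
    simp
  · intro a _
    rfl

lemma addEnergy_eq_card_filter_sub [AddCommGroup α] (s t : Finset α) :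
    E[s, t] = #{x ∈ (s ×ˢ s) ×ˢ (t ×ˢ t) | x.1.1 - x.1.2 = x.2.1 - x.2.2} :=
  card_equiv ((Equiv.refl _).prodCongr (Equiv.prodComm _ _)) fun ⟨⟨a₁, a₂⟩, b₁, b₂⟩ => by
    simp only [mem_filter, mem_product, Equiv.prodCongr_apply, Equiv.coe_refl,
      Equiv.coe_prodComm, Prod.map_apply, id_eq, Prod.swap_prod_mk, sub_eq_sub_iff_add_eq_add]
    rw [add_comm b₂]
    tauto

lemma addEnergy_sq_le_mul_addEnergy [AddCommGroup α] (s t : Finset α) :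
    E[s, t] ^ 2 ≤ E[s] * E[t] := by
  simp only [addEnergy_eq_card_filter_sub]
  exact card_filter_product_sq_le (fun x : α × α => x.1 - x.2) (s ×ˢ s) (t ×ˢ t)

lemma addEnergy_image_of_injective {δ : Type*} [AddCommMonoid α] [AddCommMonoid δ]
    [DecidableEq δ] (φ : α →+ δ) (hφ : Function.Injective φ) (s t : Finset α) :
    E[s.image φ, t.image φ] = E[s, t] := by
  have hΦ : Function.Injective (Prod.map (Prod.map φ φ) (Prod.map φ φ)) :=
    (hφ.prodMap hφ).prodMap (hφ.prodMap hφ)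
  rw [addEnergy, addEnergy, ← prodMap_image_product, ← prodMap_image_product,
    ← prodMap_image_product, filter_image, card_image_of_injective _ hΦ]
  simp only [Prod.map_fst, Prod.map_snd, ← map_add, hφ.eq_iff]

lemma sum_sq_card_filter_add_le_addEnergy [AddCommMonoid α] (s t u : Finset α) :
    ∑ c ∈ u, #{x ∈ s ×ˢ t | x.1 + x.2 = c} ^ 2 ≤ E[s, t] := by
  rw [addEnergy_eq_sum_sq']
  refine sum_le_sum_of_ne_zero fun c _ hc => ?_
  obtain ⟨a, ha, b, hb, rfl⟩ : ∃ a ∈ s, ∃ b ∈ t, a + b = c := by simpa using hc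
  exact add_mem_add ha hb

end Finset

lemma Eadd_coe_eq_addEnergy (P : Finset ℂ) : Eadd (P : Set ℂ) = E[P] := by
  have hEadd : Eadd (P : Set ℂ) = #{x ∈ P ×ˢ P ×ˢ P ×ˢ P | x.1 + x.2.1 = x.2.2.1 + x.2.2.2} := by
    rw [Eadd, ← Set.ncard_coe_finset]
    congr 1
    ext x
    simp [and_assoc]
  let e : ℂ × ℂ × ℂ × ℂ ≃ (ℂ × ℂ) × (ℂ × ℂ) :=
    ⟨fun x => ((x.1, x.2.2.1), (x.2.1, x.2.2.2)), fun y => (y.1.1, y.2.1, y.1.2, y.2.2),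
      fun _ => rfl, fun _ => rfl⟩
  rw [hEadd, addEnergy]
  exact card_equiv e fun x => by simp [e]; tauto

lemma aMul_image_U0 {g : ℂ × ℂ} (hg : g ∈ affG) : aMul g '' U0 = {θ | θ.1 = g.1} := by
  ext θ
  constructor
  · rintro ⟨u, hu, rfl⟩
    simp [aMul, show u.1 = 1 from hu]
  · intro hθ
    refine ⟨(1, (θ.2 - g.2) / g.1), rfl, Prod.ext (by simpa [aMul] using hθ.symm) ?_⟩
    simp only [aMul]
    field_simp [show g.1 ≠ 0 from hg]
    ring

lemma rich_eq_card_filter_add (P : Finset ℂ) (a c : ℂ) :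
    rich P (a, c) = #{x ∈ P ×ˢ P.image (-a * ·) | x.1 + x.2 = c} := by
  rw [card_filter_add_eq_card_filter_neg_add_mem, rich, ← Set.ncard_coe_finset]
  congr 1
  ext z
  simp only [Set.mem_inter_iff, Set.mem_image, coe_filter, mem_coe, mem_image, aAct,
    Set.mem_ofPred_eq]
  refine and_congr_right fun _ => exists_congr fun p => and_congr_right fun _ => ?_
  constructor <;> intro h <;> linear_combination -h

lemma rich_le_card (P : Finset ℂ) (θ : ℂ × ℂ) : rich P θ ≤ #P :=
  (Set.ncard_inter_le_ncard_left _ _ P.finite_toSet).trans (Set.ncard_coe_finset P).le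

lemma sum_rich_sq_le_Eadd (P : Finset ℂ) {a : ℂ} (ha : a ≠ 0) (T : Finset (ℂ × ℂ))
    (hT : ∀ θ ∈ T, θ.1 = a) : ∑ θ ∈ T, rich P θ ^ 2 ≤ Eadd (P : Set ℂ) := by
  set B := P.image (-a * ·)
  have hB : E[B] = E[P] :=
    addEnergy_image_of_injective (AddMonoidHom.mulLeft (-a))
      (mul_right_injective₀ (neg_ne_zero.2 ha)) P P
  have hPB : E[P, B] ≤ E[P] := by
    have := addEnergy_sq_le_mul_addEnergy P B
    rw [hB, ← sq] at this
    exact (Nat.pow_le_pow_iff_left two_ne_zero).1 this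
  have hsnd : Set.InjOn Prod.snd (T : Set (ℂ × ℂ)) := fun θ hθ θ' hθ' h =>
    Prod.ext ((hT θ hθ).trans (hT θ' hθ').symm) h
  calc ∑ θ ∈ T, rich P θ ^ 2 = ∑ c ∈ T.image Prod.snd, #{x ∈ P ×ˢ B | x.1 + x.2 = c} ^ 2 := by
        rw [sum_image hsnd]
        refine sum_congr rfl fun θ hθ => ?_
        rw [← rich_eq_card_filter_add, ← hT θ hθ]
    _ ≤ E[P, B] := sum_sq_card_filter_add_le_addEnergy _ _ _
    _ ≤ E[P] := hPB
    _ = Eadd (P : Set ℂ) := (Eadd_coe_eq_addEnergy P).symm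

theorem stmt7_general (P : Finset ℂ) (C₁ C₂ : ℝ) (hC₁ : 0 < C₁) (hC₂ : 0 < C₂)
    (S : Finset (ℂ × ℂ))
    (hrich : ∀ θ ∈ S, C₁ * (P.card : ℝ) ≤ (rich P θ : ℝ))
    (g : ℂ × ℂ) (hg : g ∈ affG)
    (hcoset : C₂ * (P.card : ℝ) ≤ (((aMul g '' U0) ∩ (S : Set (ℂ × ℂ))).ncard : ℝ))
    (hpos : 0 < C₂ * (P.card : ℝ)) :
    C₂ * C₁ ^ 3 * (P.card : ℝ) ^ 3 ≤ (Eadd (P : Set ℂ) : ℝ) := by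
  set T := S.filter (·.1 = g.1)
  have hT : C₂ * #P ≤ #T := by
    have hcosetT : aMul g '' U0 ∩ S = (T : Set (ℂ × ℂ)) := by
      ext θ
      simp [aMul_image_U0 hg, T, and_comm]
    rwa [hcosetT, Set.ncard_coe_finset] at hcoset
  obtain ⟨θ, hθ⟩ : T.Nonempty := card_pos.1 (by exact_mod_cast hpos.trans_le hT)
  have hC₁_le : C₁ ≤ 1 := by
    have hθP : C₁ * #P ≤ #P :=
      (hrich θ (mem_filter.1 hθ).1).trans (by exact_mod_cast rich_le_card P θ)
    nlinarith [pos_of_mul_pos_right hpos hC₂.le]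
  have hsum : (#T : ℝ) * (C₁ * #P) ^ 2 ≤ Eadd (P : Set ℂ) :=
    calc (#T : ℝ) * (C₁ * #P) ^ 2 = ∑ _θ ∈ T, (C₁ * #P) ^ 2 := by simp
      _ ≤ ∑ θ ∈ T, (rich P θ : ℝ) ^ 2 := sum_le_sum fun θ hθ =>
          pow_le_pow_left₀ (by positivity) (hrich θ (mem_filter.1 hθ).1) 2
      _ ≤ Eadd (P : Set ℂ) := by
          exact_mod_cast sum_rich_sq_le_Eadd P hg T fun θ hθ => (mem_filter.1 hθ).2
  calc C₂ * C₁ ^ 3 * (P.card : ℝ) ^ 3 = C₂ * #P * (C₁ * #P) ^ 2 * C₁ := by ring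
    _ ≤ C₂ * #P * (C₁ * #P) ^ 2 := mul_le_of_le_one_right (by positivity) hC₁_le
    _ ≤ #T * (C₁ * #P) ^ 2 := by gcongr
    _ ≤ Eadd (P : Set ℂ) := hsum

/-- a rich unipotent coset gives large additive energy. -/
theorem stmt7 (P : Finset ℂ) (C₁ C₂ : ℝ) (hC₁ : 0 < C₁) (hC₂ : 0 < C₂)
    (S : Finset (ℂ × ℂ)) (hS : (S : Set (ℂ × ℂ)) ⊆ SE2)
    (hrich : ∀ θ ∈ S, C₁ * (P.card : ℝ) ≤ (rich P θ : ℝ))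
    (g : ℂ × ℂ) (hg : g ∈ affG)
    (hcoset : C₂ * (P.card : ℝ) ≤ (((aMul g '' U0) ∩ (S : Set (ℂ × ℂ))).ncard : ℝ))
    (hpos : 0 < C₂ * (P.card : ℝ)) :
    C₂ * C₁ ^ 3 * (P.card : ℝ) ^ 3 ≤ (Eadd (P : Set ℂ) : ℝ) :=
  stmt7_general P C₁ C₂ hC₁ hC₂ S hrich g hg hcoset hpos

end
end

section
/- Let P be a finite point set in ℂ and let C₁, C₃ > 0 with C₁|P| ≥ 1. Let S ⊆ SE₂(ℝ) be a finite set such that every θ ∈ S satisfies |P ∩ θ·P| ≥ C₁|P|, and suppose there are g ∈ Aff(ℂ) and z ∈ ℂ with |gT(z) ∩ S| ≥ C₃|P| > 0. Then there exists t ∈ ℂ such that E_×(P − t) ≥ C₃|P|·(C₁|P| − 1)². -/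
open scoped Classical

noncomputable section

/-!
Every `θ ∈ g T(z)` acts as `w ↦ a_θ (w - z) + g·z`, so a `k`-rich `θ` yields at least `k - 1`
pairs `(a, b)` of nonzero points of `A = P - z` and `B = P - g·z` with `b = a_θ a`, and distinct
`θ` have distinct `a_θ`. Two pairs with the same ratio give a solution of `a₁ b₁ = a₂ b₂`
(`aᵢ ∈ A`, `bᵢ ∈ B`), so the mixed energy `E_×(A, B)` is at least `C₃|P| (C₁|P| - 1)²`.
Sorting its solutions by `a₁ / a₂ = b₂ / b₁` instead and applying Cauchy–Schwarz gives
`E_×(A, B)² ≤ E_×(A) E_×(B)`, so `t = z` or `t = g·z` works.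
-/

open Finset
open scoped Pointwise Combinatorics.Additive

namespace Finset

variable {K : Type*} [CommGroupWithZero K] [DecidableEq K] {A B : Finset K}

def ratioReps (A B : Finset K) (l : K) : Finset (K × K) := {p ∈ A ×ˢ B | p.2 = l * p.1}

lemma mem_ratioReps {l : K} {p : K × K} :
    p ∈ ratioReps A B l ↔ p.1 ∈ A ∧ p.2 ∈ B ∧ p.2 = l * p.1 := by
  simp [ratioReps, and_assoc]

/-- `Eₘ[B, A]` counts `b₁ a₁ = b₂ a₂`, i.e. `b₁ / a₂ = b₂ / a₁`: sort by this common ratio. -/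
lemma mulEnergy_eq_sum_sq_card_ratioReps (hA : 0 ∉ A) {L : Finset K} (hL : B / A ⊆ L) :
    Eₘ[B, A] = ∑ l ∈ L, #(ratioReps A B l) ^ 2 := by
  have hne : ∀ a ∈ A, a ≠ 0 := fun a ha h => hA (h ▸ ha)
  rw [mulEnergy, card_eq_sum_card_fiberwise (f := fun x => x.1.1 / x.2.2) (t := L)]
  · refine sum_congr rfl fun l _ => ?_
    rw [sq, ← card_product]
    refine card_nbij' (fun x => ((x.2.2, x.1.1), (x.2.1, x.1.2)))
      (fun y => ((y.1.2, y.2.2), (y.2.1, y.1.1))) ?_ ?_ (fun _ _ => rfl) (fun _ _ => rfl)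
    · rintro ⟨⟨b₁, b₂⟩, a₁, a₂⟩ hx
      simp only [mem_coe, mem_filter, mem_product] at hx
      obtain ⟨⟨⟨⟨hb₁, hb₂⟩, ha₁, ha₂⟩, hrel⟩, rfl⟩ := hx
      simp only [coe_product, Set.mem_prod, mem_coe, mem_ratioReps]
      refine ⟨⟨ha₂, hb₁, (div_mul_cancel₀ _ (hne _ ha₂)).symm⟩, ha₁, hb₂, ?_⟩
      rw [div_mul_eq_mul_div, eq_div_iff (hne _ ha₂), hrel]
    · rintro ⟨⟨a₂, b₁⟩, a₁, b₂⟩ hy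
      simp only [coe_product, Set.mem_prod, mem_coe, mem_ratioReps] at hy
      obtain ⟨⟨ha₂, hb₁, rfl⟩, ha₁, hb₂, rfl⟩ := hy
      simp only [mem_coe, mem_filter, mem_product]
      refine ⟨⟨⟨⟨hb₁, hb₂⟩, ha₁, ha₂⟩, mul_right_comm _ _ _⟩, mul_div_cancel_right₀ _ (hne _ ha₂)⟩
  · intro x hx
    simp only [mem_coe, mem_filter, mem_product] at hx
    exact hL (div_mem_div hx.1.1.1 hx.1.2.2)

/-- `Eₘ[A, B]` counts `a₁ b₁ = a₂ b₂`, i.e. `a₁ / a₂ = b₂ / b₁`: sort by this common ratio. -/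
lemma mulEnergy_eq_sum_card_ratioReps_mul (hA : 0 ∉ A) {R : Finset K} (hR : A / A ⊆ R) :
    Eₘ[A, B] = ∑ r ∈ R, #(ratioReps A A r) * #(ratioReps B B r) := by
  have hne : ∀ a ∈ A, a ≠ 0 := fun a ha h => hA (h ▸ ha)
  rw [mulEnergy, card_eq_sum_card_fiberwise (f := fun x => x.1.1 / x.1.2) (t := R)]
  · refine sum_congr rfl fun r _ => ?_
    rw [← card_product]
    refine card_nbij' (fun x => ((x.1.2, x.1.1), x.2)) (fun y => ((y.1.2, y.1.1), y.2))
      ?_ ?_ (fun _ _ => rfl) (fun _ _ => rfl)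
    · rintro ⟨⟨a₁, a₂⟩, b₁, b₂⟩ hx
      simp only [mem_coe, mem_filter, mem_product] at hx
      obtain ⟨⟨⟨⟨ha₁, ha₂⟩, hb₁, hb₂⟩, hrel⟩, rfl⟩ := hx
      simp only [coe_product, Set.mem_prod, mem_coe, mem_ratioReps]
      refine ⟨⟨ha₂, ha₁, (div_mul_cancel₀ _ (hne _ ha₂)).symm⟩, hb₁, hb₂, ?_⟩
      rw [div_mul_eq_mul_div, eq_div_iff (hne _ ha₂), hrel, mul_comm]
    · rintro ⟨⟨a₂, a₁⟩, b₁, b₂⟩ hy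
      simp only [coe_product, Set.mem_prod, mem_coe, mem_ratioReps] at hy
      obtain ⟨⟨ha₂, ha₁, rfl⟩, hb₁, hb₂, rfl⟩ := hy
      simp only [mem_coe, mem_filter, mem_product]
      exact ⟨⟨⟨⟨ha₁, ha₂⟩, hb₁, hb₂⟩, by rw [mul_assoc, mul_left_comm]⟩,
        mul_div_cancel_right₀ _ (hne _ ha₂)⟩
  · intro x hx
    simp only [mem_coe, mem_filter, mem_product] at hx
    exact hR (div_mem_div hx.1.1.1 hx.1.1.2)

lemma sum_sq_card_ratioReps_le_mulEnergy (hA : 0 ∉ A) (L : Finset K) :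
    ∑ l ∈ L, #(ratioReps A B l) ^ 2 ≤ Eₘ[B, A] := by
  rw [mulEnergy_eq_sum_sq_card_ratioReps hA (subset_union_right (s₁ := L))]
  exact sum_le_sum_of_subset subset_union_left

lemma mulEnergy_sq_le_mul_mulEnergy (hA : 0 ∉ A) (hB : 0 ∉ B) :
    Eₘ[A, B] ^ 2 ≤ Eₘ[A] * Eₘ[B] := by
  rw [mulEnergy_eq_sum_card_ratioReps_mul hA (subset_union_left (s₂ := B / B)),
    mulEnergy_eq_sum_sq_card_ratioReps hA subset_union_left,
    mulEnergy_eq_sum_sq_card_ratioReps hB subset_union_right]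
  exact sum_mul_sq_le_sq_mul_sq _ _ _

lemma mulEnergy_le_max_mulEnergy (hA : 0 ∉ A) (hB : 0 ∉ B) :
    Eₘ[A, B] ≤ max Eₘ[A] Eₘ[B] := by
  by_contra! h
  rw [max_lt_iff] at h
  have hsq := mulEnergy_sq_le_mul_mulEnergy hA hB
  nlinarith [Nat.mul_lt_mul'' h.1 h.2]

end Finset

def punctured (P : Finset ℂ) (t : ℂ) : Finset ℂ := (P.image (· - t)).erase 0

lemma zero_notMem_punctured (P : Finset ℂ) (t : ℂ) : 0 ∉ punctured P t :=
  notMem_erase 0 _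

lemma Emul_coe_eq_mulEnergy (A : Finset ℂ) : Emul ↑A = Eₘ[A] := by
  rw [Emul, mulEnergy, ← Set.ncard_coe_finset]
  refine Set.ncard_congr (fun x _ => ((x.1, x.2.2.1), x.2.1, x.2.2.2)) ?_ ?_ ?_
  · rintro ⟨x₁, x₂, x₃, x₄⟩ ⟨h₁, h₂, h₃, h₄, h⟩
    simp only [mem_coe, mem_filter, mem_product]
    exact ⟨⟨⟨h₁, h₃⟩, h₂, h₄⟩, h⟩
  · rintro ⟨x₁, x₂, x₃, x₄⟩ ⟨y₁, y₂, y₃, y₄⟩ - - h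
    simp only [Prod.mk.injEq] at h
    simp [h]
  · rintro ⟨⟨x₁, x₃⟩, x₂, x₄⟩ hx
    simp only [mem_coe, mem_filter, mem_product] at hx
    exact ⟨(x₁, x₂, x₃, x₄), ⟨hx.1.1.1, hx.1.2.1, hx.1.1.2, hx.1.2.2, hx.2⟩, rfl⟩

lemma mulEnergy_punctured_le_Emul (P : Finset ℂ) (t : ℂ) :
    Eₘ[punctured P t] ≤ Emul ((· - t) '' ↑P) := by
  rw [← coe_image, Emul_coe_eq_mulEnergy]
  exact mulEnergy_mono (erase_subset _ _) (erase_subset _ _)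

lemma rich_le_card_ratioReps_add_one (P : Finset ℂ) {θ : ℂ × ℂ} {z z' : ℂ} (hθ₁ : θ.1 ≠ 0)
    (hθ : ∀ w, aAct θ w = θ.1 * (w - z) + z') :
    rich P θ ≤ #(ratioReps (punctured P z) (punctured P z') θ.1) + 1 := by
  set Q := {q ∈ P | aAct θ q ∈ P}
  have hQ : rich P θ ≤ #Q := by
    calc rich P θ ≤ (aAct θ '' ↑Q).ncard := by
          refine Set.ncard_le_ncard ?_ (Set.toFinite _)
          rintro _ ⟨hp, q, hq, rfl⟩
          exact ⟨q, by simpa [Q] using ⟨hq, hp⟩, rfl⟩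
      _ ≤ #Q := (Set.ncard_image_le Q.finite_toSet).trans_eq (Set.ncard_coe_finset Q)
  have hQz : #(Q.erase z) ≤ #(ratioReps (punctured P z) (punctured P z') θ.1) := by
    refine card_le_card_of_injOn (fun q => (q - z, aAct θ q - z')) ?_ ?_
    · intro q hq
      simp only [mem_coe, mem_erase, mem_filter, Q] at hq
      obtain ⟨hqz, hqP, hθq⟩ := hq
      have hqz' : q - z ≠ 0 := sub_ne_zero.2 hqz
      simp only [mem_coe, mem_ratioReps, punctured, mem_erase, mem_image, hθ]
      refine ⟨⟨hqz', q, hqP, rfl⟩, ⟨by simpa using mul_ne_zero hθ₁ hqz', _, hθq, ?_⟩, by ring⟩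
      rw [hθ]
    · intro q _ q' _ h
      simpa using congrArg Prod.fst h
  have hzQ := pred_card_le_card_erase (s := Q) (a := z)
  omega

section Coset

variable {g θ : ℂ × ℂ} {z : ℂ}

lemma aAct_eq_of_mem_coset_stab (hθ : θ ∈ aMul g '' stab z) (w : ℂ) :
    aAct θ w = θ.1 * (w - z) + aAct g z := by
  obtain ⟨s, ⟨-, hs⟩, rfl⟩ := hθ
  simp only [aAct, aMul] at hs ⊢
  linear_combination g.1 * hs

lemma fst_ne_zero_of_mem_coset_stab (hg : g ∈ affG) (hθ : θ ∈ aMul g '' stab z) : θ.1 ≠ 0 := by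
  obtain ⟨s, ⟨hs, -⟩, rfl⟩ := hθ
  exact mul_ne_zero hg hs

lemma injOn_fst_coset_stab : Set.InjOn Prod.fst (aMul g '' stab z) := by
  intro θ hθ θ' hθ' h
  have e := aAct_eq_of_mem_coset_stab hθ 0
  have e' := aAct_eq_of_mem_coset_stab hθ' 0
  simp only [aAct, mul_zero, zero_add, zero_sub] at e e'
  exact Prod.ext h (by rw [e, e', h])

lemma card_mul_sq_le_mulEnergy_of_subset_coset (P : Finset ℂ) {C : ℝ} (hC : 1 ≤ C)
    (hg : g ∈ affG) {T : Finset (ℂ × ℂ)} (hT : ↑T ⊆ aMul g '' stab z)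
    (hrich : ∀ θ ∈ T, C ≤ rich P θ) :
    #T * (C - 1) ^ 2 ≤ Eₘ[punctured P z, punctured P (aAct g z)] := by
  set A := punctured P z
  set B := punctured P (aAct g z)
  have hfibre : ∀ θ ∈ T, C - 1 ≤ #(ratioReps A B θ.1) := by
    intro θ hθ
    have hle : (rich P θ : ℝ) ≤ #(ratioReps A B θ.1) + 1 := by
      exact_mod_cast rich_le_card_ratioReps_add_one P (fst_ne_zero_of_mem_coset_stab hg (hT hθ))
        (aAct_eq_of_mem_coset_stab (hT hθ))
    linarith [hrich θ hθ]
  have hsum : ∑ θ ∈ T, #(ratioReps A B θ.1) ^ 2 ≤ Eₘ[A, B] := by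
    rw [← sum_image (f := fun a => #(ratioReps A B a) ^ 2) (injOn_fst_coset_stab.mono hT),
      mulEnergy_comm]
    exact sum_sq_card_ratioReps_le_mulEnergy (zero_notMem_punctured P z) _
  calc #T * (C - 1) ^ 2 ≤ ∑ θ ∈ T, (#(ratioReps A B θ.1) : ℝ) ^ 2 := by
        rw [← nsmul_eq_mul]
        exact card_nsmul_le_sum _ _ _ fun θ hθ => pow_le_pow_left₀ (by linarith) (hfibre θ hθ) 2
    _ ≤ Eₘ[A, B] := by exact_mod_cast hsum

end Coset

theorem stmt8_general (P : Finset ℂ) (C₁ C₃ : ℝ)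
    (hC₁P : 1 ≤ C₁ * (P.card : ℝ))
    (S : Finset (ℂ × ℂ))
    (hrich : ∀ θ ∈ S, C₁ * (P.card : ℝ) ≤ (rich P θ : ℝ))
    (g : ℂ × ℂ) (hg : g ∈ affG) (z : ℂ)
    (hcoset : C₃ * (P.card : ℝ) ≤ (((aMul g '' stab z) ∩ (S : Set (ℂ × ℂ))).ncard : ℝ)) :
    ∃ t : ℂ, C₃ * (P.card : ℝ) * (C₁ * (P.card : ℝ) - 1) ^ 2 ≤
      (Emul ((fun p => p - t) '' (P : Set ℂ)) : ℝ) := by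
  set T := {θ ∈ S | θ ∈ aMul g '' stab z}
  have hT : C₃ * P.card ≤ #T := by
    have hTset : aMul g '' stab z ∩ ↑S = ↑T := by ext; simp [T, and_comm]
    rwa [hTset, Set.ncard_coe_finset] at hcoset
  have hmixed := card_mul_sq_le_mulEnergy_of_subset_coset P hC₁P hg (T := T)
    (fun θ hθ => (mem_filter.1 hθ).2) (fun θ hθ => hrich θ (mem_filter.1 hθ).1)
  have hmax := mulEnergy_le_max_mulEnergy (zero_notMem_punctured P z)
    (zero_notMem_punctured P (aAct g z))
  obtain ⟨t, ht⟩ : ∃ t, Eₘ[punctured P z, punctured P (aAct g z)] ≤ Eₘ[punctured P t] := by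
    rcases max_choice Eₘ[punctured P z] Eₘ[punctured P (aAct g z)] with h | h
    · exact ⟨z, h ▸ hmax⟩
    · exact ⟨aAct g z, h ▸ hmax⟩
  refine ⟨t, le_trans ?_ (Nat.cast_le.2 (ht.trans (mulEnergy_punctured_le_Emul P t)))⟩
  calc C₃ * P.card * (C₁ * P.card - 1) ^ 2 ≤ #T * (C₁ * P.card - 1) ^ 2 := by gcongr
    _ ≤ _ := hmixed

/-- a rich torus coset gives large multiplicative energy. -/
theorem stmt8 (P : Finset ℂ) (C₁ C₃ : ℝ) (hC₁ : 0 < C₁) (hC₃ : 0 < C₃)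
    (hC₁P : 1 ≤ C₁ * (P.card : ℝ))
    (S : Finset (ℂ × ℂ)) (hS : (S : Set (ℂ × ℂ)) ⊆ SE2)
    (hrich : ∀ θ ∈ S, C₁ * (P.card : ℝ) ≤ (rich P θ : ℝ))
    (g : ℂ × ℂ) (hg : g ∈ affG) (z : ℂ)
    (hcoset : C₃ * (P.card : ℝ) ≤ (((aMul g '' stab z) ∩ (S : Set (ℂ × ℂ))).ncard : ℝ))
    (hpos : 0 < C₃ * (P.card : ℝ)) :
    ∃ t : ℂ, C₃ * (P.card : ℝ) * (C₁ * (P.card : ℝ) - 1) ^ 2 ≤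
      (Emul ((fun p => p - t) '' (P : Set ℂ)) : ℝ) :=
  stmt8_general P C₁ C₃ hC₁P S hrich g hg z hcoset

end
end

section
/- Let P be a finite point set in ℂ, let z ∈ ℂ, let θ ∈ SE₂(ℝ), and let C₁, C₂ > 0. Suppose S ⊆ SE₂(ℝ) is a finite set such that |θ·(T(z) ∩ SE₂(ℝ)) ∩ S| ≥ C₂|P| and every element η ∈ S satisfies |P ∩ η·P| ≥ C₁|P|. Then there exist a constant C₃ > 0 depending only on C₁ and C₂, and a circle γ ⊆ ℂ, such that |P ∩ γ| ≥ C₃|P|. -/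
open scoped Classical

noncomputable section

/-!
Every motion `η` in the coset `θ·(T(z) ∩ SE₂(ℝ))` is a rigid motion sending `z` to `w = θ·z`, so it
maps each circle about `z` onto the circle of the same radius about `w`. Moreover such an `η` is
determined by the image of any single point `q ≠ z`. Hence the pairs `(η, q)` with `q, η·q ∈ P`
and `q ≠ z`, of which there are at least `|K|(C₁|P| - 1)` for the coset part `K` of `S`, inject
into the pairs `(q, p) ∈ P × P` with `|p - w| = |q - z|`. By pigeonhole some circle about `w`
then carries at least `C₁C₂|P|/2` points once `C₁|P| > 2`; otherwise a single point of `P`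
(a circle of radius `0`) suffices.
-/

open Finset

lemma aAct_aMul (g h : ℂ × ℂ) (q : ℂ) : aAct (aMul g h) q = aAct g (aAct h q) := by
  simp only [aAct, aMul]; ring

lemma fst_ne_zero_of_mem_SE2 {g : ℂ × ℂ} (hg : g ∈ SE2) : g.1 ≠ 0 := by
  rintro h
  simp [SE2, h] at hg

lemma aMul_mem_SE2 {g h : ℂ × ℂ} (hg : g ∈ SE2) (hh : h ∈ SE2) : aMul g h ∈ SE2 := by
  simp only [SE2, Set.mem_ofPred_eq, aMul, norm_mul] at *
  rw [hg, hh, one_mul]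

lemma norm_aAct_sub_aAct {g : ℂ × ℂ} (hg : g ∈ SE2) (p q : ℂ) :
    ‖aAct g p - aAct g q‖ = ‖p - q‖ := by
  have hg' : ‖g.1‖ = 1 := hg
  rw [show aAct g p - aAct g q = g.1 * (p - q) by simp only [aAct]; ring, norm_mul, hg', one_mul]

lemma eq_of_aAct_eq_of_aAct_eq {g h : ℂ × ℂ} {z q : ℂ} (hz : aAct g z = aAct h z)
    (hq : aAct g q = aAct h q) (hqz : q ≠ z) : g = h := by
  simp only [aAct] at hz hq
  have hfst : g.1 = h.1 := by
    have : (g.1 - h.1) * (q - z) = 0 := by linear_combination hq - hz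
    simpa [sub_eq_zero, hqz] using this
  exact Prod.ext hfst (by linear_combination hz - z * hfst)

lemma mem_SE2_and_aAct_eq_of_mem_coset {θ η : ℂ × ℂ} {z : ℂ} (hθ : θ ∈ SE2)
    (hη : η ∈ aMul θ '' (stab z ∩ SE2)) : η ∈ SE2 ∧ aAct η z = aAct θ z := by
  obtain ⟨t, ⟨⟨-, htz⟩, ht⟩, rfl⟩ := hη
  exact ⟨aMul_mem_SE2 hθ ht, by rw [aAct_aMul, htz]⟩

lemma rich_eq_card_filter (P : Finset ℂ) {η : ℂ × ℂ} (hη : η.1 ≠ 0) :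
    rich P η = (P.filter fun q => aAct η q ∈ P).card := by
  have hinj : Function.Injective (aAct η) := fun p q h => by
    simpa [aAct, hη] using h
  have : (P : Set ℂ) ∩ aAct η '' P = aAct η '' ↑(P.filter fun q => aAct η q ∈ P) := by
    ext p
    simp only [Set.mem_inter_iff, Set.mem_image, Finset.coe_filter, Set.mem_ofPred_eq,
      Finset.mem_coe]
    constructor
    · rintro ⟨hp, q, hq, rfl⟩
      exact ⟨q, ⟨hq, hp⟩, rfl⟩
    · rintro ⟨q, ⟨hq, hp⟩, rfl⟩
      exact ⟨hp, q, hq, rfl⟩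
  rw [rich, this, Set.ncard_image_of_injective _ hinj, Set.ncard_coe_finset]

lemma ncard_inter_circleSet (P : Finset ℂ) (c₀ : ℂ) (ρ : ℝ) :
    ((P : Set ℂ) ∩ circleSet c₀ ρ).ncard = (P.filter fun p => ‖p - c₀‖ = ρ).card := by
  rw [← Set.ncard_coe_finset, Finset.coe_filter]
  rfl

section Coset

variable (P : Finset ℂ) {z w : ℂ} {K : Finset (ℂ × ℂ)}

lemma card_rich_pairs_le_card_concyclic_pairs (hK : ∀ η ∈ K, η ∈ SE2 ∧ aAct η z = w) :
    (K.sigma fun η => (P.filter fun q => aAct η q ∈ P).erase z).card ≤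
      (P.sigma fun q => P.filter fun p => ‖p - w‖ = ‖q - z‖).card := by
  refine card_le_card_of_injOn (fun x => ⟨x.2, aAct x.1 x.2⟩) ?_ ?_
  · rintro ⟨η, q⟩ hx
    simp only [coe_sigma, Set.mem_sigma_iff, mem_coe, mem_erase, mem_filter] at hx ⊢
    obtain ⟨hηK, -, hq, hηq⟩ := hx
    obtain ⟨hη, hηz⟩ := hK η hηK
    exact ⟨hq, hηq, by rw [← hηz, norm_aAct_sub_aAct hη]⟩
  · rintro ⟨η₁, q₁⟩ hx₁ ⟨η₂, q₂⟩ hx₂ h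
    simp only [coe_sigma, Set.mem_sigma_iff, mem_coe, mem_erase, mem_filter] at hx₁ hx₂
    simp only [Sigma.mk.injEq] at h
    obtain ⟨rfl, hq⟩ := h
    have hη : η₁ = η₂ := eq_of_aAct_eq_of_aAct_eq
      (((hK η₁ hx₁.1).2).trans (hK η₂ hx₂.1).2.symm) (eq_of_heq hq) hx₁.2.1
    rw [hη]

lemma exists_circle_sum_rich_le (hK : ∀ η ∈ K, η ∈ SE2 ∧ aAct η z = w) (hP : P.Nonempty) :
    ∃ ρ : ℝ, 0 ≤ ρ ∧
      ∑ η ∈ K, rich P η ≤ K.card + P.card * ((P : Set ℂ) ∩ circleSet w ρ).ncard := by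
  set fib : ℂ → Finset ℂ := fun q => P.filter fun p => ‖p - w‖ = ‖q - z‖
  obtain ⟨q₀, -, hq₀⟩ := P.exists_max_image (fun q => (fib q).card) hP
  refine ⟨‖q₀ - z‖, norm_nonneg _, ?_⟩
  rw [ncard_inter_circleSet]
  calc ∑ η ∈ K, rich P η
      ≤ ∑ η ∈ K, (((P.filter fun q => aAct η q ∈ P).erase z).card + 1) := by
        refine sum_le_sum fun η hη => ?_
        rw [rich_eq_card_filter P (fst_ne_zero_of_mem_SE2 (hK η hη).1)]
        have := pred_card_le_card_erase (s := P.filter fun q => aAct η q ∈ P) (a := z)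
        omega
    _ = K.card + (K.sigma fun η => (P.filter fun q => aAct η q ∈ P).erase z).card := by
        rw [card_sigma, sum_add_distrib, sum_const, smul_eq_mul, mul_one, add_comm]
    _ ≤ K.card + (P.sigma fib).card := by
        gcongr
        exact card_rich_pairs_le_card_concyclic_pairs P hK
    _ ≤ K.card + P.card * (fib q₀).card := by
        rw [card_sigma]
        gcongr
        exact sum_le_card_nsmul _ _ _ hq₀

end Coset

lemma exists_circle_of_mul_card_le_one (P : Finset ℂ) {c : ℝ} (hc : c * P.card ≤ 1) :
    ∃ (c₀ : ℂ) (ρ : ℝ), 0 ≤ ρ ∧ c * P.card ≤ ((P : Set ℂ) ∩ circleSet c₀ ρ).ncard := by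
  rcases P.eq_empty_or_nonempty with rfl | ⟨p, hp⟩
  · exact ⟨0, 0, le_rfl, by simp⟩
  · refine ⟨p, 0, le_rfl, hc.trans ?_⟩
    have hpos : 0 < ((P : Set ℂ) ∩ circleSet p 0).ncard :=
      (Set.ncard_pos (P.finite_toSet.inter_of_left _)).mpr ⟨p, hp, by simp [circleSet]⟩
    exact_mod_cast hpos

/-- a rich coset of a torus in `SE₂(ℝ)` gives a rich circle (Prop. 5.2). -/
theorem stmt12 (C₁ C₂ : ℝ) (hC₁ : 0 < C₁) (hC₂ : 0 < C₂) :
    ∃ C₃ : ℝ, 0 < C₃ ∧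
      ∀ (P : Finset ℂ) (z : ℂ) (θ : ℂ × ℂ), θ ∈ SE2 →
        ∀ S : Finset (ℂ × ℂ), (S : Set (ℂ × ℂ)) ⊆ SE2 →
          C₂ * (P.card : ℝ) ≤
            (((aMul θ '' (stab z ∩ SE2)) ∩ (S : Set (ℂ × ℂ))).ncard : ℝ) →
          (∀ η ∈ S, C₁ * (P.card : ℝ) ≤ (rich P η : ℝ)) →
          ∃ (c₀ : ℂ) (ρ : ℝ), 0 ≤ ρ ∧
            C₃ * (P.card : ℝ) ≤ (((P : Set ℂ) ∩ circleSet c₀ ρ).ncard : ℝ) := by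
  refine ⟨min (C₁ * C₂ / 2) (C₁ / 2), by positivity, fun P z θ hθ S _ hcoset hrich => ?_⟩
  set n : ℝ := (P.card : ℝ)
  rcases le_or_gt (C₁ * n) 2 with hsmall | hlarge
  · exact exists_circle_of_mul_card_le_one P (by nlinarith [min_le_right (C₁ * C₂ / 2) (C₁ / 2)])
  have hP : P.Nonempty := by
    rw [← card_pos, ← Nat.cast_pos (α := ℝ)]
    nlinarith
  set K := S.filter (· ∈ aMul θ '' (stab z ∩ SE2))
  have hK : C₂ * n ≤ K.card := by
    convert hcoset using 3
    rw [← Set.ncard_coe_finset, coe_filter, Set.inter_comm (aMul θ '' _)]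
    rfl
  obtain ⟨ρ, hρ, hsum⟩ := exists_circle_sum_rich_le P (z := z) (K := K)
    (fun η hη => mem_SE2_and_aAct_eq_of_mem_coset hθ (mem_filter.mp hη).2) hP
  set M : ℝ := (((P : Set ℂ) ∩ circleSet (aAct θ z) ρ).ncard : ℝ)
  have hrichK : K.card * (C₁ * n) ≤ ∑ η ∈ K, (rich P η : ℝ) := by
    simpa using card_nsmul_le_sum K _ _ fun η hη => hrich η (mem_filter.mp hη).1
  have hsum' : ∑ η ∈ K, (rich P η : ℝ) ≤ K.card + n * M := by
    unfold n M; exact_mod_cast hsum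
  have hn : 0 < n := by nlinarith
  refine ⟨aAct θ z, ρ, hρ, le_of_mul_le_mul_left ?_ hn⟩
  calc n * (min (C₁ * C₂ / 2) (C₁ / 2) * n)
      ≤ n * (C₁ * C₂ / 2 * n) := by gcongr; exact min_le_left _ _
    _ = C₂ * n * (C₁ * n / 2) := by ring
    _ ≤ K.card * (C₁ * n - 1) := by gcongr; linarith
    _ ≤ n * M := by linarith

end
end
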